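/- arXiv:2207.09937 — 7 statements merged into one kernel-verified Lean document; each statement's English description precedes it below -/
import Mathlib

section
/- If an infinite word x over a finite alphabet has the property that all factors of some fixed length n > 0 are abelian equivalent (i.e., its abelian complexity at n equals 1), then x is purely periodic with period n. -/
/-! Moving the window of length `n` one step to the right removes the letter `x i` and adds the
letter `x (i + n)`; since both windows have the same letter counts, these two letters coincide. -/

def factorW {d : ℕ} (x : ℕ → Fin d) (i n : ℕ) : List (Fin d) :=
  (List.range n).map (fun j => x (i + j))

def abelEq {α : Type*} [DecidableEq α] (u v : List α) : Prop :=
  ∀ a, u.count a = v.count a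

theorem abelEq_iff_perm {α : Type*} [DecidableEq α] {u v : List α} :
    abelEq u v ↔ u.Perm v :=
  List.perm_iff_count.symm

theorem eq_of_cons_perm_append_singleton {α : Type*} {a b : α} {l : List α}
    (h : (a :: l).Perm (l ++ [b])) : a = b := by
  have hcons : (a :: l).Perm (b :: l) := h.trans (List.perm_append_singleton b l)
  exact (Multiset.cons_inj_left (l : Multiset α)).mp (Multiset.coe_eq_coe.mpr hcons)

theorem factorW_succ_eq_cons {d : ℕ} (x : ℕ → Fin d) (i m : ℕ) :
    factorW x i (m + 1) = x i :: factorW x (i + 1) m := by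
  simp only [factorW, List.range_succ_eq_map, List.map_cons, List.map_map]
  congr 1; simp [Function.comp_def, Nat.add_assoc, Nat.add_comm 1]

theorem factorW_succ_eq_append {d : ℕ} (x : ℕ → Fin d) (i m : ℕ) :
    factorW x i (m + 1) = factorW x i m ++ [x (i + m)] := by
  simp [factorW, List.range_succ]

/-- If all factors of length `n > 0` of an infinite word are abelian equivalent,
then the word is purely periodic with period `n`. -/
theorem stmt0 {d : ℕ} (x : ℕ → Fin d) (n : ℕ) (hn : 0 < n)
    (h : ∀ i j : ℕ, abelEq (factorW x i n) (factorW x j n)) :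
    ∀ i, x (i + n) = x i := by
  intro i
  obtain ⟨m, rfl⟩ := Nat.exists_eq_add_one_of_ne_zero hn.ne'
  have hperm := abelEq_iff_perm.mp (h i (i + 1))
  rw [factorW_succ_eq_cons, factorW_succ_eq_append, Nat.add_right_comm] at hperm
  exact (eq_of_cons_perm_append_singleton hperm).symm
end

section
/- The abelian complexity of the Thue–Morse word equals 2 for all odd n ≥ 1 and equals 3 for all even n ≥ 2. -/
/-- The abelian complexity of `x` at `n`: the number of distinct Parikh vectors
of factors of `x` of length `n`. -/
noncomputable def abComplexity {d : ℕ} (x : ℕ → Fin d) (n : ℕ) : ℕ :=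
  Set.ncard {p : Fin d → ℕ | ∃ i, ∀ a, (factorW x i n).count a = p a}

/-- The Thue–Morse word: `tm n` is the parity of the number of `1`s in the binary
expansion of `n`. -/
def tm : ℕ → Fin 2 :=
  fun n => if ((Nat.digits 2 n).count 1) % 2 = 0 then 0 else 1

/-!
A factor of `tm` of even length starting at an even position is a concatenation of blocks
`tm (2k) tm (2k+1) ∈ {01, 10}`, so it contains exactly half `1`s. Any other factor differs from
such an aligned one by one letter at each end, and these letters are values of `tm` itself, so
the number of `1`s in a factor of length `2m+1` is `m` or `m+1`, and in a factor of length `2m`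
it is `m - 1`, `m` or `m + 1`. All values occur because `tm (2^N + x) = tm x + 1` for `x < 2^N`:
from `tm (2^m) = 1` one finds positions `a` with `tm a`, `tm (a + m)` taking any two distinct
values.
-/

lemma List.count_zero_add_count_one (l : List (Fin 2)) : l.count 0 + l.count 1 = l.length := by
  induction l with
  | nil => rfl
  | cons a l ih => fin_cases a <;> simp <;> omega

lemma List.count_one_singleton (a : Fin 2) : [a].count 1 = a.val := by
  fin_cases a <;> rfl

section Word

variable {d : ℕ} (x : ℕ → Fin d)

lemma length_factorW (i n : ℕ) : (factorW x i n).length = n := by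
  simp [factorW]

lemma factorW_succ (i n : ℕ) : factorW x i (n + 1) = factorW x i n ++ [x (i + n)] := by
  simp [factorW, List.range_succ]

lemma factorW_succ' (i n : ℕ) : factorW x i (n + 1) = x i :: factorW x (i + 1) n := by
  simp only [factorW, List.range_succ_eq_map, List.map_cons, List.map_map, add_zero]
  congr 2
  funext j
  simp [Function.comp, Nat.add_assoc, Nat.add_comm 1 j]

end Word

section BinaryWord

variable (x : ℕ → Fin 2)

lemma count_one_factorW_succ (i n : ℕ) :
    (factorW x i (n + 1)).count 1 = (factorW x i n).count 1 + (x (i + n)).val := by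
  rw [factorW_succ, List.count_append, List.count_one_singleton]

lemma count_one_factorW_succ' (i n : ℕ) :
    (factorW x i (n + 1)).count 1 = (x i).val + (factorW x (i + 1) n).count 1 := by
  rw [factorW_succ', ← List.singleton_append, List.count_append, List.count_one_singleton]

/-- Over a binary alphabet a Parikh vector is determined by its number of `1`s. -/
lemma abComplexity_eq_ncard_count_one (n : ℕ) :
    abComplexity x n = {s | ∃ i, (factorW x i n).count 1 = s}.ncard := by
  have hzero (i : ℕ) : (factorW x i n).count 0 = n - (factorW x i n).count 1 := by
    have := List.count_zero_add_count_one (factorW x i n)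
    rw [length_factorW] at this
    omega
  have hinj : Function.Injective (fun s : ℕ => ![n - s, s]) := fun s t h => by
    simpa using congrFun h 1
  rw [abComplexity, ← Set.ncard_image_of_injective _ hinj]
  congr 1
  ext p
  simp only [Set.mem_ofPred_eq, Set.mem_image, exists_exists_eq_and, Fin.forall_fin_two, hzero]
  constructor
  · rintro ⟨i, h0, h1⟩
    exact ⟨i, by ext a; fin_cases a <;> simp [← h0, ← h1]⟩
  · rintro ⟨i, rfl⟩
    exact ⟨i, rfl, rfl⟩

end BinaryWord

lemma tm_two_mul (k : ℕ) : tm (2 * k) = tm k := by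
  rcases k.eq_zero_or_pos with rfl | hk
  · rfl
  · simp only [tm, Nat.digits_def' one_lt_two (by omega : 0 < 2 * k), Nat.mul_mod_right,
      Nat.mul_div_cancel_left k two_pos, List.count_cons]
    simp

lemma tm_two_mul_add_one (k : ℕ) : tm (2 * k + 1) = tm k + 1 := by
  have hdiv : (2 * k + 1) / 2 = k := by omega
  simp only [tm, Nat.digits_add_two_add_one 0 (2 * k), Nat.mul_add_mod_self_left, hdiv,
    List.count_cons]
  split_ifs <;> simp_all <;> omega

lemma tm_two_pow_add {N x : ℕ} (hx : x < 2 ^ N) : tm (2 ^ N + x) = tm x + 1 := by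
  induction N generalizing x with
  | zero =>
    obtain rfl : x = 0 := by simpa using hx
    rfl
  | succ N ih =>
    obtain ⟨y, rfl | rfl⟩ := x.even_or_odd'
    · rw [pow_succ', ← mul_add, tm_two_mul, tm_two_mul, ih (by omega)]
    · rw [pow_succ', ← add_assoc, ← mul_add, tm_two_mul_add_one, tm_two_mul_add_one,
        ih (by omega)]

lemma tm_two_pow (N : ℕ) : tm (2 ^ N) = 1 := by
  rw [← add_zero (2 ^ N), tm_two_pow_add (by positivity)]
  rfl

lemma exists_le_tm_eq (m : ℕ) (b : Fin 2) : ∃ n, m ≤ n ∧ tm n = b := by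
  have hm : m < 2 ^ m := Nat.lt_two_pow_self
  fin_cases b
  · refine ⟨2 ^ (m + 1) + 2 ^ m, by omega, ?_⟩
    rw [tm_two_pow_add (by rw [pow_succ]; omega), tm_two_pow]
    rfl
  · exact ⟨2 ^ m, hm.le, tm_two_pow m⟩

/-- Adding a power of two exceeding all positions involved flips `tm`, which exchanges the
roles of `0` and `1`. -/
lemma exists_tm_eq_tm_add_eq {m : ℕ} (hm : 1 ≤ m) (b : Fin 2) :
    ∃ a, tm a = b ∧ tm (a + m) = b + 1 := by
  have hzero : ∃ a, tm a = 0 ∧ tm (a + m) = 1 := by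
    have hlt : m < 2 ^ m := Nat.lt_two_pow_self
    have hflip : tm (2 ^ (m + 1) - m) = tm (2 ^ m - m) + 1 := by
      rw [← tm_two_pow_add (by omega : 2 ^ m - m < 2 ^ m)]
      congr 1
      rw [pow_succ]
      omega
    by_cases h : tm (2 ^ m - m) = 0
    · refine ⟨2 ^ m - m, h, ?_⟩
      rw [Nat.sub_add_cancel hlt.le, tm_two_pow]
    · refine ⟨2 ^ (m + 1) - m, ?_, ?_⟩
      · rw [hflip, Fin.eq_one_of_ne_zero _ h]
        rfl
      · rw [Nat.sub_add_cancel (by rw [pow_succ]; omega), tm_two_pow]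
  obtain ⟨a, ha, ham⟩ := hzero
  fin_cases b
  · exact ⟨a, ha, ham⟩
  · have hlt : a + m < 2 ^ (a + m) := Nat.lt_two_pow_self
    refine ⟨2 ^ (a + m) + a, ?_, ?_⟩
    · rw [tm_two_pow_add (by omega), ha]; rfl
    · rw [add_assoc, tm_two_pow_add hlt, ham]; rfl

lemma count_one_factorW_tm_two_mul (a b : ℕ) : (factorW tm (2 * a) (2 * b)).count 1 = b := by
  induction b with
  | zero => rfl
  | succ b ih =>
    have hpair : (tm (2 * (a + b))).val + (tm (2 * (a + b) + 1)).val = 1 := by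
      rw [tm_two_mul_add_one, tm_two_mul]
      generalize tm (a + b) = c
      fin_cases c <;> rfl
    rw [Nat.mul_succ, count_one_factorW_succ, count_one_factorW_succ, ih, ← add_assoc, ← mul_add]
    omega

lemma count_one_factorW_tm_two_mul_odd (a m : ℕ) :
    (factorW tm (2 * a) (2 * m + 1)).count 1 = m + (tm (a + m)).val := by
  rw [count_one_factorW_succ, count_one_factorW_tm_two_mul, ← mul_add, tm_two_mul]

lemma count_one_factorW_tm_two_mul_add_one_odd (a m : ℕ) :
    (factorW tm (2 * a + 1) (2 * m + 1)).count 1 = (tm (2 * a + 1)).val + m := by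
  rw [count_one_factorW_succ', add_assoc, ← mul_add_one, count_one_factorW_tm_two_mul]

/-- Both sides count the `1`s of the factor of length `2 m + 1` at `2 a`. -/
lemma count_one_factorW_tm_two_mul_add_one_even (a m : ℕ) :
    (tm a).val + (factorW tm (2 * a + 1) (2 * m)).count 1 = m + (tm (a + m)).val := by
  rw [← count_one_factorW_tm_two_mul_odd, count_one_factorW_succ', tm_two_mul]

lemma count_one_factorW_tm_odd (m : ℕ) :
    {s | ∃ i, (factorW tm i (2 * m + 1)).count 1 = s} = {m, m + 1} := by
  ext s
  simp only [Set.mem_ofPred_eq, Set.mem_insert_iff, Set.mem_singleton_iff]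
  constructor
  · rintro ⟨i, rfl⟩
    obtain ⟨a, rfl | rfl⟩ := i.even_or_odd'
    · rw [count_one_factorW_tm_two_mul_odd]
      have := (tm (a + m)).isLt
      omega
    · rw [count_one_factorW_tm_two_mul_add_one_odd]
      have := (tm (2 * a + 1)).isLt
      omega
  · intro hs
    obtain ⟨n, hmn, hn⟩ := exists_le_tm_eq m (if s = m then 0 else 1)
    refine ⟨2 * (n - m), ?_⟩
    rw [count_one_factorW_tm_two_mul_odd, Nat.sub_add_cancel hmn, hn]
    split_ifs <;> simp_all

lemma count_one_factorW_tm_even (m : ℕ) :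
    {s | ∃ i, (factorW tm i (2 * (m + 1))).count 1 = s} = {m, m + 1, m + 2} := by
  ext s
  simp only [Set.mem_ofPred_eq, Set.mem_insert_iff, Set.mem_singleton_iff]
  constructor
  · rintro ⟨i, rfl⟩
    obtain ⟨a, rfl | rfl⟩ := i.even_or_odd'
    · rw [count_one_factorW_tm_two_mul]
      omega
    · have := count_one_factorW_tm_two_mul_add_one_even a (m + 1)
      have := (tm a).isLt
      have := (tm (a + (m + 1))).isLt
      omega
  · rintro (hs | hs | hs)
    · obtain ⟨a, ha, ham⟩ := exists_tm_eq_tm_add_eq (Nat.le_add_left 1 m) 1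
      have := count_one_factorW_tm_two_mul_add_one_even a (m + 1)
      rw [ha, ham] at this
      exact ⟨2 * a + 1, by simp only [Fin.reduceAdd, Fin.val_one, Fin.val_zero] at this; omega⟩
    · exact ⟨0, by rw [count_one_factorW_tm_two_mul 0 (m + 1), hs]⟩
    · obtain ⟨a, ha, ham⟩ := exists_tm_eq_tm_add_eq (Nat.le_add_left 1 m) 0
      have := count_one_factorW_tm_two_mul_add_one_even a (m + 1)
      rw [ha, ham] at this
      exact ⟨2 * a + 1, by simp only [Fin.reduceAdd, Fin.val_one, Fin.val_zero] at this; omega⟩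

/-- The abelian complexity of the Thue–Morse word is `2` for odd lengths and `3` for
even lengths `≥ 2`. -/
theorem stmt3 :
    (∀ n : ℕ, Odd n → abComplexity tm n = 2) ∧
      (∀ n : ℕ, Even n → 2 ≤ n → abComplexity tm n = 3) := by
  constructor
  · rintro n ⟨m, rfl⟩
    rw [abComplexity_eq_ncard_count_one, count_one_factorW_tm_odd]
    exact Set.ncard_pair (by omega)
  · rintro n ⟨r, rfl⟩ hr
    obtain ⟨m, rfl⟩ : ∃ m, r = m + 1 := ⟨r - 1, by omega⟩
    rw [abComplexity_eq_ncard_count_one, ← two_mul, count_one_factorW_tm_even]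
    exact Set.ncard_eq_three.mpr ⟨m, m + 1, m + 2, by omega, by omega, by omega, rfl⟩
end

section
/- If a word w over a d-letter alphabet has two coprime abelian periods p and q and length |w| ≥ 2pq − 1, then w is a power of a single letter. -/
/-- `parikhLt u v`: the Parikh vector of `u` is componentwise at most that of `v`,
with strictly smaller norm. -/
def parikhLt {α : Type*} [DecidableEq α] (u v : List α) : Prop :=
  (∀ a, u.count a ≤ v.count a) ∧ u.length < v.length

/-- `w` has abelian period `p` (with some preperiod): `w = u₀ u₁ ⋯ u_{m-1} u_m`, where
the middle blocks `u₁, …, u_{m-1}` all have length `p` and equal Parikh vectors, and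
the Parikh vectors of the head `u₀` and of the tail `u_m` are strictly dominated by
that of the middle blocks. -/
def HasAbPeriod {α : Type*} [DecidableEq α] (w : List α) (p : ℕ) : Prop :=
  ∃ (u₀ : List α) (mid : List (List α)) (um : List α),
    w = u₀ ++ mid.flatten ++ um ∧ mid ≠ [] ∧
    (∀ u ∈ mid, u.length = p) ∧
    (∀ u ∈ mid, ∀ v ∈ mid, abelEq u v) ∧
    (∀ u ∈ mid, parikhLt u₀ u ∧ parikhLt um u)

/-!
Along the factorisation for the period `p`, the number of `a`'s in the prefix of length
`s + ip` (where `s < p` is the length of the head) is affine in `i` with slope `c_a`, the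
number of `a`'s in a block; likewise for `q`, with head length `t` and slope `e_a`. By the
Chinese remainder theorem the two grids `s + pℕ` and `t + qℕ` share a point `N < pq`, and
`N + pq` is a common point too; the length bound guarantees both lie within the
factorisations. Counting the `a`'s between them gives `q c_a = p e_a`, so `p ∣ c_a ≤ p`:
a block consists of a single letter repeated `p` times, and since the head, the tail and
all blocks are dominated by one block, `w` is a power of that letter.
-/

theorem Nat.exists_add_mul_eq_add_mul {p q s t : ℕ} (hpq : p.Coprime q) (hs : s < p)
    (ht : t < q) : ∃ i < q, ∃ j < p, s + i * p = t + j * q := by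
  have hk := Nat.chineseRemainder_lt_mul hpq s t (by omega) (by omega)
  generalize Nat.chineseRemainder hpq s t = K at hk
  obtain ⟨k, hks, hkt⟩ := K
  have hks' : k % p = s := Eq.trans hks (Nat.mod_eq_of_lt hs)
  have hkt' : k % q = t := Eq.trans hkt (Nat.mod_eq_of_lt ht)
  refine ⟨k / p, Nat.div_lt_of_lt_mul hk, k / q, Nat.div_lt_of_lt_mul (by rwa [mul_comm]), ?_⟩
  rw [← hks', ← hkt', Nat.mod_add_div' k p, Nat.mod_add_div' k q]

namespace List

variable {α : Type*} [DecidableEq α]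

theorem sum_map_eq_length_mul {β : Type*} {L : List β} {f : β → ℕ} {c : ℕ}
    (hf : ∀ x ∈ L, f x = c) : (L.map f).sum = L.length * c := by
  rw [sum_eq_card_nsmul _ c, length_map, smul_eq_mul]
  intro x hx
  obtain ⟨y, hy, rfl⟩ := mem_map.mp hx
  exact hf y hy

def IsAbGrid (w u : List α) (s m : ℕ) : Prop :=
  ∀ i ≤ m, ∀ a, (w.take (s + i * u.length)).count a = (w.take s).count a + i * u.count a

theorem IsAbGrid.mul_count_eq {w u v : List α} {s t m n i j k l : ℕ}
    (hu : IsAbGrid w u s m) (hv : IsAbGrid w v t n) (hi : i + k ≤ m) (hj : j + l ≤ n)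
    (hmeet : s + i * u.length = t + j * v.length) (hshift : k * u.length = l * v.length)
    (a : α) : k * u.count a = l * v.count a := by
  have hmeet' : s + (i + k) * u.length = t + (j + l) * v.length := by
    rw [add_mul, add_mul]; omega
  have h₁ := hu i (by omega) a
  have h₂ := hu (i + k) hi a
  have h₃ := hv j (by omega) a
  have h₄ := hv (j + l) hj a
  rw [hmeet] at h₁
  rw [hmeet'] at h₂
  simp only [add_mul] at h₂ h₄
  omega

theorem isAbGrid_append_flatten (u₀ um u : List α) {L : List (List α)}
    (hlen : ∀ v ∈ L, v.length = u.length) (hab : ∀ v ∈ L, abelEq v u) :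
    IsAbGrid (u₀ ++ L.flatten ++ um) u u₀.length L.length := by
  intro i hi a
  have hsplit : u₀ ++ L.flatten ++ um =
      u₀ ++ ((L.take i).flatten ++ ((L.drop i).flatten ++ um)) := by
    conv_lhs => rw [← take_append_drop i L, flatten_append]
    simp only [append_assoc]
  have hprefix : (L.take i).flatten.length = i * u.length := by
    rw [length_flatten, sum_map_eq_length_mul (fun v hv => hlen v (mem_of_mem_take hv)),
      length_take_of_le hi]
  have hcount : (L.take i).flatten.count a = i * u.count a := by
    rw [count_flatten, sum_map_eq_length_mul (fun v hv => hab v (mem_of_mem_take hv) a),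
      length_take_of_le hi]
  rw [hsplit, take_left, ← hprefix, ← length_append, ← append_assoc, take_left, count_append,
    hcount]

theorem mem_of_mem_append_flatten {u₀ um u : List α} {L : List (List α)}
    (hab : ∀ v ∈ L, abelEq v u) (h₀ : ∀ a, u₀.count a ≤ u.count a)
    (hm : ∀ a, um.count a ≤ u.count a) {b : α} (hb : b ∈ u₀ ++ L.flatten ++ um) :
    b ∈ u := by
  rw [← count_pos_iff] at hb ⊢
  rw [count_append, count_append, count_flatten] at hb
  by_contra hzero
  have h₀b := h₀ b
  have hmb := hm b
  rw [sum_map_eq_length_mul (fun v hv => hab v hv b), show u.count b = 0 by omega, mul_zero] at hb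
  omega

theorem eq_of_mem_of_forall_length_dvd_count {u : List α} (h : ∀ b, u.length ∣ u.count b)
    {a b : α} (ha : a ∈ u) (hb : b ∈ u) : b = a := by
  have hpos : 0 < u.count a := count_pos_iff.mpr ha
  have hfull : u.count a = u.length :=
    le_antisymm count_le_length (Nat.le_of_dvd hpos (h a))
  exact (count_eq_length.mp hfull b hb).symm

end List

open List

theorem HasAbPeriod.exists_isAbGrid {α : Type*} [DecidableEq α] {w : List α} {p : ℕ}
    (h : HasAbPeriod w p) : ∃ (u : List α) (s m : ℕ), u.length = p ∧ s < p ∧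
      w.length + 1 < (m + 2) * p ∧ (∀ b ∈ w, b ∈ u) ∧ IsAbGrid w u s m := by
  obtain ⟨u₀, L, um, rfl, hne, hlen, hab, hdom⟩ := h
  obtain ⟨u, hu⟩ := exists_mem_of_ne_nil L hne
  obtain ⟨⟨h₀, hs⟩, hm, ht⟩ := hdom u hu
  have hup := hlen u hu
  have hab' : ∀ v ∈ L, abelEq v u := fun v hv => hab v hv u hu
  have hwlen : (u₀ ++ L.flatten ++ um).length = u₀.length + L.length * p + um.length := by
    rw [length_append, length_append, length_flatten, sum_map_eq_length_mul hlen]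
  refine ⟨u, u₀.length, L.length, hup, hup ▸ hs, ?_,
    fun b => mem_of_mem_append_flatten hab' h₀ hm,
    isAbGrid_append_flatten u₀ um u (fun v hv => (hlen v hv).trans hup.symm) hab'⟩
  rw [hwlen, add_mul]
  omega

/-- If a word has two coprime abelian periods `p` and `q` and length at least
`2pq - 1`, then it is a power of a single letter. -/
theorem stmt9 {d : ℕ} (w : List (Fin d)) (p q : ℕ) (hpq : Nat.Coprime p q)
    (hp : HasAbPeriod w p) (hq : HasAbPeriod w q) (hlen : 2 * p * q - 1 ≤ w.length) :
    ∃ a : Fin d, ∀ b ∈ w, b = a := by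
  obtain ⟨u, s, m, rfl, hs, hwm, hwu, hu⟩ := hp.exists_isAbGrid
  obtain ⟨v, t, n, rfl, ht, hwn, -, hv⟩ := hq.exists_isAbGrid
  obtain ⟨i, hi, j, hj, hmeet⟩ := Nat.exists_add_mul_eq_add_mul hpq hs ht
  have hlen' := Nat.sub_le_iff_le_add.mp hlen
  have hm : i + v.length ≤ m := by
    have : 2 * v.length < m + 2 := Nat.lt_of_mul_lt_mul_left (a := u.length) (by linarith)
    omega
  have hn : j + u.length ≤ n := by
    have : 2 * u.length < n + 2 := Nat.lt_of_mul_lt_mul_left (a := v.length) (by linarith)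
    omega
  have hdvd : ∀ b, u.length ∣ u.count b := fun b =>
    hpq.dvd_of_dvd_mul_left ⟨v.count b, hu.mul_count_eq hv hm hn hmeet (mul_comm _ _) b⟩
  obtain ⟨a, ha⟩ := exists_mem_of_length_pos (Nat.zero_lt_of_lt hs)
  exact ⟨a, fun b hb => eq_of_mem_of_forall_length_dvd_count hdvd ha (hwu b hb)⟩
end

section
/- Let u and v be distinct abelian primitive roots of the same word w. Then gcd(|u|, |v|) ≥ 2. -/
/-- `w` is an abelian `k`-power: `w` is the concatenation of `k` blocks that are
pairwise abelian equivalent. -/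
def IsAbPower {α : Type*} [DecidableEq α] (k : ℕ) (w : List α) : Prop :=
  ∃ l : List (List α), l.length = k ∧ w = l.flatten ∧ ∀ u ∈ l, ∀ v ∈ l, abelEq u v

/-- `w` is abelian primitive: it is not an abelian `k`-power for any `k ≥ 2`. -/
def AbPrimitive {α : Type*} [DecidableEq α] (w : List α) : Prop :=
  ∀ k : ℕ, 2 ≤ k → ¬ IsAbPower k w

/-- `u` is an abelian root of `w`: `w` decomposes into blocks, the first of which is
`u`, all abelian equivalent to `u`. -/
def IsAbRoot {α : Type*} [DecidableEq α] (u w : List α) : Prop :=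
  ∃ l : List (List α), l ≠ [] ∧ w = l.flatten ∧ l.head? = some u ∧ ∀ v ∈ l, abelEq v u

section

variable {α : Type*} [DecidableEq α]

lemma abelEq.length_eq {u v : List α} (h : abelEq u v) : u.length = v.length :=
  (List.perm_iff_count.mpr h).length_eq

lemma count_flatten_of_forall_abelEq {l : List (List α)} {u : List α}
    (h : ∀ v ∈ l, abelEq v u) (a : α) : l.flatten.count a = l.length * u.count a := by
  rw [List.count_flatten, List.map_congr_left fun v hv => h v hv a, List.map_const',
    List.sum_replicate, smul_eq_mul]

lemma length_flatten_of_forall_abelEq {l : List (List α)} {u : List α}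
    (h : ∀ v ∈ l, abelEq v u) : l.flatten.length = l.length * u.length := by
  rw [List.length_flatten, List.map_congr_left fun v hv => (h v hv).length_eq, List.map_const',
    List.sum_replicate, smul_eq_mul]

lemma IsAbRoot.isPrefix {u w : List α} (h : IsAbRoot u w) : u <+: w := by
  obtain ⟨_ | ⟨x, t⟩, hne, rfl, hhead, -⟩ := h
  · exact absurd rfl hne
  · obtain rfl : x = u := by simpa using hhead
    exact ⟨t.flatten, rfl⟩

lemma IsAbRoot.length_mul_count {u w : List α} (h : IsAbRoot u w) (a : α) :
    u.length * w.count a = w.length * u.count a := by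
  obtain ⟨l, -, rfl, -, hall⟩ := h
  rw [count_flatten_of_forall_abelEq hall, length_flatten_of_forall_abelEq hall]
  ring

lemma IsAbRoot.length_mul_count_comm {u v w : List α} (hu : IsAbRoot u w) (hv : IsAbRoot v w)
    (a : α) : v.length * u.count a = u.length * v.count a := by
  rcases Nat.eq_zero_or_pos w.length with hw | hw
  · have hu0 : u.length = 0 := Nat.eq_zero_of_le_zero (hw ▸ hu.isPrefix.length_le)
    have hv0 : v.length = 0 := Nat.eq_zero_of_le_zero (hw ▸ hv.isPrefix.length_le)
    simp [hu0, hv0]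
  · refine Nat.eq_of_mul_eq_mul_left hw ?_
    calc w.length * (v.length * u.count a)
        = v.length * (u.length * w.count a) := by rw [hu.length_mul_count]; ring
      _ = u.length * (v.length * w.count a) := by ring
      _ = w.length * (u.length * v.count a) := by rw [hv.length_mul_count]; ring

lemma isAbPower_replicate (n : ℕ) (b : α) : IsAbPower n (List.replicate n b) := by
  refine ⟨List.replicate n [b], List.length_replicate, List.flatten_replicate_singleton.symm, ?_⟩
  intro x hx y hy
  rw [List.eq_of_mem_replicate hx, List.eq_of_mem_replicate hy]
  exact fun _ => rfl

lemma AbPrimitive.ne_nil {u : List α} (hu : AbPrimitive u) : u ≠ [] := by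
  rintro rfl
  exact hu 2 le_rfl ⟨[[], []], rfl, rfl, by simp [abelEq]⟩

lemma AbPrimitive.length_eq_one_of_dvd_count {u : List α} (hu : AbPrimitive u)
    (hdvd : ∀ a, u.length ∣ u.count a) : u.length = 1 := by
  obtain ⟨b, hb⟩ := List.exists_mem_of_ne_nil u hu.ne_nil
  have hcount : u.count b = u.length :=
    le_antisymm List.count_le_length (Nat.le_of_dvd (List.count_pos_iff.mpr hb) (hdvd b))
  have hrep : u = List.replicate u.length b :=
    List.eq_replicate_iff.mpr ⟨rfl, fun c hc => (List.count_eq_length.mp hcount c hc).symm⟩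
  by_contra hne
  have h2 : 2 ≤ u.length := by
    have := List.length_pos_iff.mpr hu.ne_nil
    omega
  have hpow := isAbPower_replicate u.length b
  rw [← hrep] at hpow
  exact hu u.length h2 hpow

end

/-- If `u` and `v` are distinct abelian primitive roots of the same word `w`, then
`gcd(|u|, |v|) ≥ 2`. -/
theorem stmt11 {α : Type*} [DecidableEq α] (u v w : List α)
    (hu : IsAbRoot u w) (hu' : AbPrimitive u)
    (hv : IsAbRoot v w) (hv' : AbPrimitive v)
    (huv : u ≠ v) :
    2 ≤ Nat.gcd u.length v.length := by
  by_contra hlt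
  have hcop : Nat.Coprime u.length v.length := by
    have := Nat.gcd_pos_of_pos_left v.length (List.length_pos_iff.mpr hu'.ne_nil)
    rw [Nat.Coprime]
    omega
  have hproportional := hu.length_mul_count_comm hv
  have hu1 : u.length = 1 := hu'.length_eq_one_of_dvd_count fun a =>
    hcop.dvd_of_dvd_mul_left (Dvd.intro _ (hproportional a).symm)
  have hv1 : v.length = 1 := hv'.length_eq_one_of_dvd_count fun a =>
    hcop.symm.dvd_of_dvd_mul_left (Dvd.intro _ (hproportional a))
  have hlen : u.length = v.length := hu1.trans hv1.symm
  exact huv <| (List.prefix_of_prefix_length_le hu.isPrefix hv.isPrefix hlen.le).eq_of_length hlen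
end

section
/- Let s_α be a Sturmian word of irrational slope α, and let m, k be positive integers with k ≥ 2. Then s_α contains an abelian power of period m and exponent k if and only if ‖mα‖ < 1/k, where ‖θ‖ denotes the distance from θ to the nearest integer. -/
/-!
A block of length `m` starting at position `p` of the Sturmian word has sum
`⌊x + mα⌋ - ⌊x⌋` with `x = αp + ρ`, so `k` consecutive blocks starting at `i` have equal sums
exactly when `j ↦ ⌊c + j·mα⌋` (`c = αi + ρ`) is an arithmetic progression of some difference `d`
on `0, …, k`. As `⌊c + j·mα⌋ - j d = ⌊c⌋ + ⌊{c} + j(mα - d)⌋` and `j ↦ {c} + j(mα - d)` is affine,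
this happens iff `{c} + k(mα - d) ∈ [0, 1)`. Such `c` and `d` force `|mα - d| < 1/k`; conversely,
if `‖mα‖ < 1/k`, the admissible `{c}` fill an open subinterval of `[0, 1)`, which the orbit
`{αi + ρ}` meets since the multiples of an irrational `α` are dense in `ℝ/ℤ`.
-/

/-- The Sturmian word of slope `α` and intercept `ρ`:
`s(n) = ⌊α(n+1)+ρ⌋ − ⌊αn+ρ⌋`. -/
noncomputable def sturmian (α ρ : ℝ) (n : ℕ) : ℤ :=
  ⌊α * (n + 1) + ρ⌋ - ⌊α * n + ρ⌋

/-- `s` contains an abelian power of period `m` and exponent `k`: for some position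
`i`, the `k` consecutive blocks of length `m` starting at `i` all have the same sum
(equivalently, for a binary word, the same number of occurrences of `1`). -/
def HasAbPow (s : ℕ → ℤ) (m k : ℕ) : Prop :=
  ∃ i : ℕ, ∀ j < k,
    (∑ t ∈ Finset.range m, s (i + j * m + t)) = ∑ t ∈ Finset.range m, s (i + t)

/-- The distance from a real number to the nearest integer. -/
noncomputable def nearestDist (θ : ℝ) : ℝ :=
  min (Int.fract θ) (1 - Int.fract θ)

open Set

lemma Irrational.exists_fract_mul_natCast_add_mem_Ioo {α : ℝ} (hα : Irrational α) (ρ : ℝ)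
    {u v : ℝ} (hu : 0 ≤ u) (huv : u < v) (hv : v ≤ 1) :
    ∃ n : ℕ, Int.fract (α * n + ρ) ∈ Ioo u v := by
  have hmul : DenseRange (fun n : ℕ ↦ n • (α : AddCircle (1 : ℝ))) :=
    denseRange_zsmul_iff_nsmul.1 (AddCircle.denseRange_zsmul_coe_iff.2 (by simpa using hα))
  have hdense : DenseRange (fun n : ℕ ↦ n • (α : AddCircle (1 : ℝ)) + ρ) :=
    (Homeomorph.addRight (ρ : AddCircle (1 : ℝ))).surjective.denseRange.comp hmul
      (Homeomorph.addRight _).continuous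
  obtain ⟨n, x, hx, hxn⟩ := hdense.exists_mem_open
    (QuotientAddGroup.isOpenMap_coe _ isOpen_Ioo) ((nonempty_Ioo.2 huv).image _)
  have hx_eq : x = Int.fract (α * n + ρ) := by
    rw [← AddCircle.coe_eq_coe_iff_of_mem_Ico (p := (1 : ℝ)) (a := 0)]
    · simp [hxn, mul_comm α, ← nsmul_eq_mul]
    · exact ⟨hu.trans hx.1.le, by linarith [hx.2]⟩
    · simpa using Int.fract_lt_one _
  exact ⟨n, hx_eq ▸ hx⟩

lemma nearestDist_eq_abs_sub_round (θ : ℝ) : nearestDist θ = |θ - round θ| :=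
  (abs_sub_round_eq_min θ).symm

lemma sturmian_sum_range (α ρ : ℝ) (p m : ℕ) :
    ∑ t ∈ Finset.range m, sturmian α ρ (p + t) = ⌊α * (p + m) + ρ⌋ - ⌊α * p + ρ⌋ := by
  simpa [sturmian, add_assoc] using Finset.sum_range_sub (fun t : ℕ ↦ ⌊α * (p + t : ℕ) + ρ⌋) m

lemma sturmian_sum_range_add_mul (α ρ : ℝ) (i j m : ℕ) :
    ∑ t ∈ Finset.range m, sturmian α ρ (i + j * m + t) =
      ⌊α * i + ρ + (j + 1) * (m * α)⌋ - ⌊α * i + ρ + j * (m * α)⌋ := by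
  rw [sturmian_sum_range]
  push_cast
  ring_nf

lemma exists_forall_eq_add_mul_iff (F : ℕ → ℤ) (k : ℕ) :
    (∃ d : ℤ, ∀ j ≤ k, F j = F 0 + j * d) ↔ ∀ j < k, F (j + 1) - F j = F 1 - F 0 := by
  constructor
  · rintro ⟨d, hd⟩ j hj
    rw [hd (j + 1) hj, hd j hj.le, hd 1 (by omega)]
    push_cast
    ring
  · intro h
    refine ⟨F 1 - F 0, fun j hj ↦ ?_⟩
    induction j with
    | zero => simp
    | succ j ih =>
      rw [← sub_add_cancel (F (j + 1)) (F j), h j hj, ih (by omega)]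
      push_cast
      ring

lemma Int.floor_add_mul_eq_iff (c β : ℝ) (d : ℤ) (n : ℕ) :
    ⌊c + n * β⌋ = ⌊c⌋ + n * d ↔ Int.fract c + n * (β - d) ∈ Ico 0 1 := by
  have : c + n * β = Int.fract c + n * (β - d) + ((⌊c⌋ + n * d : ℤ) : ℝ) := by
    rw [← Int.self_sub_floor]
    push_cast
    ring
  rw [this, Int.floor_add_intCast, add_eq_right, Int.floor_eq_zero_iff]

lemma Int.forall_floor_add_mul_eq_iff (c β : ℝ) (d : ℤ) (k : ℕ) :
    (∀ j ≤ k, ⌊c + j * β⌋ = ⌊c⌋ + j * d) ↔ Int.fract c + k * (β - d) ∈ Ico 0 1 := by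
  simp only [Int.floor_add_mul_eq_iff]
  refine ⟨fun h ↦ h k le_rfl, fun ⟨h0, h1⟩ j hj ↦ ?_⟩
  -- `j ↦ {c} + j (β - d)` is monotone, so it stays between its values at `0` and at `k`.
  have hjk : (j : ℝ) ≤ k := by exact_mod_cast hj
  have := Int.fract_nonneg c
  have := Int.fract_lt_one c
  rcases le_total 0 (β - d) with hδ | hδ
  · constructor <;> nlinarith
  · constructor <;> nlinarith

lemma hasAbPow_sturmian_iff (α ρ : ℝ) (m k : ℕ) :
    HasAbPow (sturmian α ρ) m k ↔
      ∃ i : ℕ, ∃ d : ℤ, Int.fract (α * i + ρ) + k * (m * α - d) ∈ Ico 0 1 := by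
  refine exists_congr fun i ↦ ?_
  set F : ℕ → ℤ := fun j ↦ ⌊α * i + ρ + j * (m * α)⌋
  have hF₀ : F 0 = ⌊α * i + ρ⌋ := by simp [F]
  have hblock₀ : ∑ t ∈ Finset.range m, sturmian α ρ (i + t) = F 1 - F 0 := by
    simpa [F] using sturmian_sum_range_add_mul α ρ i 0 m
  calc (∀ j < k, ∑ t ∈ Finset.range m, sturmian α ρ (i + j * m + t) =
        ∑ t ∈ Finset.range m, sturmian α ρ (i + t))
      ↔ ∀ j < k, F (j + 1) - F j = F 1 - F 0 := by
        simp only [sturmian_sum_range_add_mul, hblock₀, F, Nat.cast_succ]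
    _ ↔ ∃ d : ℤ, ∀ j ≤ k, F j = F 0 + j * d := (exists_forall_eq_add_mul_iff F k).symm
    _ ↔ _ := by
        simp only [hF₀]
        exact exists_congr fun d ↦ Int.forall_floor_add_mul_eq_iff _ _ d k

lemma nearestDist_lt_of_fract_add_mul_mem {c β : ℝ} {d : ℤ} {k : ℕ} (hk : 0 < k)
    (h : Int.fract c + k * (β - d) ∈ Ico 0 1) : nearestDist β < 1 / k := by
  have hkR : (0 : ℝ) < k := Nat.cast_pos.2 hk
  have hβd : |β - d| < 1 / k := by
    rw [abs_lt, ← neg_div, lt_div_iff₀ hkR, div_lt_iff₀ hkR]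
    constructor <;> nlinarith [h.1, h.2, Int.fract_nonneg c, Int.fract_lt_one c]
  rw [nearestDist_eq_abs_sub_round]
  exact (round_le β d).trans_lt hβd

lemma exists_Ioo_add_mem_Ico {t : ℝ} (ht : |t| < 1) :
    ∃ u v : ℝ, 0 ≤ u ∧ u < v ∧ v ≤ 1 ∧ ∀ x ∈ Ioo u v, x + t ∈ Ico 0 1 := by
  rw [abs_lt] at ht
  rcases le_total 0 t with h | h
  · exact ⟨0, 1 - t, le_rfl, by linarith, by linarith,
      fun x hx ↦ ⟨by linarith [hx.1], by linarith [hx.2]⟩⟩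
  · exact ⟨-t, 1, by linarith, by linarith, le_rfl,
      fun x hx ↦ ⟨by linarith [hx.1], by linarith [hx.2]⟩⟩

theorem stmt14_general (α ρ : ℝ) (hirr : Irrational α)
    (m k : ℕ) (hk : 2 ≤ k) :
    HasAbPow (sturmian α ρ) m k ↔ nearestDist ((m : ℝ) * α) < 1 / (k : ℝ) := by
  rw [hasAbPow_sturmian_iff]
  constructor
  · rintro ⟨i, d, h⟩
    exact nearestDist_lt_of_fract_add_mul_mem (by omega) h
  · intro h
    have hkR : (0 : ℝ) < k := Nat.cast_pos.2 (by omega)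
    have hδ : |k * (m * α - round (m * α : ℝ))| < 1 := by
      rwa [abs_mul, Nat.abs_cast, ← nearestDist_eq_abs_sub_round, ← lt_div_iff₀' hkR]
    obtain ⟨u, v, hu, huv, hv, hI⟩ := exists_Ioo_add_mem_Ico hδ
    obtain ⟨i, hi⟩ := hirr.exists_fract_mul_natCast_add_mem_Ioo ρ hu huv hv
    exact ⟨i, round (m * α : ℝ), hI _ hi⟩

/-- A Sturmian word of irrational slope `α` contains an abelian power of period `m`
and exponent `k ≥ 2` iff `‖mα‖ < 1/k`. -/
theorem stmt14 (α ρ : ℝ) (hirr : Irrational α) (h0 : 0 < α) (h1 : α < 1)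
    (m k : ℕ) (hm : 0 < m) (hk : 2 ≤ k) :
    HasAbPow (sturmian α ρ) m k ↔ nearestDist ((m : ℝ) * α) < 1 / (k : ℝ) :=
  stmt14_general α ρ hirr m k hk
end

section
/- Any two rich words with the same set of palindromic factors are abelian equivalent. -/
/-!
Send each palindromic factor of `w` to the end position of its first occurrence. Two distinct
palindromes cannot share this position: the shorter would be a suffix, hence (both being
palindromes) a prefix, of the longer, and so would occur earlier. For a rich word the `|w| + 1`
palindromic factors therefore fill the `|w| + 1` positions `0, …, |w|` bijectively, and a
palindrome ends with the letter `a` exactly when its position is the end of an occurrence of `a`.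
Hence `|w|_a` is the number of palindromic factors of `w` ending with `a`, which only depends on
the set of palindromic factors.
-/

/-- The set of palindromic factors of `w` (including the empty word). -/
def palFactors {α : Type*} (w : List α) : Set (List α) :=
  {v | v <:+: w ∧ v.reverse = v}

/-- A finite word `w` is rich if it contains `|w| + 1` distinct palindromic factors
(including the empty word), the maximal possible number. -/
def Rich {α : Type*} (w : List α) : Prop :=
  (palFactors w).ncard = w.length + 1

open Finset

namespace List

variable {α : Type*}

theorem IsInfix.exists_isSuffix_take {v w : List α} (h : v <:+: w) :
    ∃ k ≤ w.length, v <:+ w.take k := by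
  obtain ⟨t, hvt, htw⟩ := infix_iff_suffix_prefix.mp h
  exact ⟨t.length, htw.length_le, prefix_iff_eq_take.mp htw ▸ hvt⟩

theorem IsSuffix.isPrefix_of_reverse_eq {u v : List α} (h : u <:+ v) (hu : u.reverse = u)
    (hv : v.reverse = v) : u <+: v := by
  rw [← reverse_suffix, hu, hv]
  exact h

theorem count_eq_card_filter_getLast?_take [DecidableEq α] (w : List α) (a : α) :
    w.count a = #{k ∈ Finset.range (w.length + 1) | (w.take k).getLast? = some a} := by
  induction w using reverseRecOn with
  | nil => simp
  | append_singleton w b ih =>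
    have htake : ∀ k ∈ Finset.range (w.length + 1),
        ((w ++ [b]).take k).getLast? = some a ↔ (w.take k).getLast? = some a := fun k hk => by
      rw [take_append_of_le_length (Nat.lt_succ_iff.mp (mem_range.mp hk))]
    rw [length_append, length_singleton, range_add_one, Finset.filter_insert,
      Finset.filter_congr htake, count_append, ih, take_of_length_le (by simp)]
    by_cases hb : b = a
    · subst hb
      rw [if_pos (by simp), card_insert_of_notMem (by simp)]
      simp
    · rw [if_neg (by simp [hb])]
      simp [hb]

end List

section FirstEnd

open List

variable {α : Type*} {v w : List α}

/-- The end position of the first occurrence of `v` in `w` (junk value `0` if `v` is not a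
factor of `w`). -/
noncomputable def firstEnd (w v : List α) : ℕ :=
  sInf {k | v <:+ w.take k}

theorem firstEnd_le_of_isSuffix_take {k : ℕ} (h : v <:+ w.take k) : firstEnd w v ≤ k :=
  Nat.sInf_le h

theorem isSuffix_take_firstEnd (h : v <:+: w) : v <:+ w.take (firstEnd w v) := by
  obtain ⟨k, -, hk⟩ := h.exists_isSuffix_take
  exact Nat.sInf_mem (s := {k | v <:+ w.take k}) ⟨k, hk⟩

theorem firstEnd_le_length (h : v <:+: w) : firstEnd w v ≤ w.length := by
  obtain ⟨k, hkw, hk⟩ := h.exists_isSuffix_take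
  exact (firstEnd_le_of_isSuffix_take hk).trans hkw

theorem getLast?_take_firstEnd (h : v <:+: w) :
    (w.take (firstEnd w v)).getLast? = v.getLast? := by
  rcases eq_or_ne v [] with rfl | hv
  · have : firstEnd w [] = 0 := Nat.le_zero.mp (firstEnd_le_of_isSuffix_take nil_suffix)
    simp [this]
  · obtain ⟨s, hs⟩ := isSuffix_take_firstEnd h
    rw [← hs, getLast?_append_of_ne_nil _ hv]

theorem eq_of_firstEnd_eq_of_length_le {u : List α} (hu : u ∈ palFactors w)
    (hv : v ∈ palFactors w) (heq : firstEnd w u = firstEnd w v)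
    (hlen : u.length ≤ v.length) : u = v := by
  obtain ⟨hu_inf, hu_pal⟩ := hu
  obtain ⟨hv_inf, hv_pal⟩ := hv
  obtain ⟨s, hs⟩ := isSuffix_take_firstEnd hv_inf
  have huv : u <:+ v :=
    suffix_of_suffix_length_le (heq ▸ isSuffix_take_firstEnd hu_inf) ⟨s, hs⟩ hlen
  obtain ⟨t, rfl⟩ := huv.isPrefix_of_reverse_eq hu_pal hv_pal
  -- `u` already ends at position `|s| + |u|`, so minimality of `firstEnd` forces `t = []`.
  have hpre : s ++ u <+: w :=
    (prefix_append (s ++ u) t).trans (by rw [append_assoc, hs]; exact take_prefix _ w)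
  have hearly : u <:+ w.take (s ++ u).length := by
    rw [← prefix_iff_eq_take.mp hpre]
    exact suffix_append s u
  have hle : firstEnd w (u ++ t) ≤ (s ++ u).length := heq ▸ firstEnd_le_of_isSuffix_take hearly
  have hge : (s ++ (u ++ t)).length ≤ firstEnd w (u ++ t) := hs ▸ length_take_le _ w
  have ht : t = [] := by
    simp only [length_append] at hle hge
    exact length_eq_zero_iff.mp (by omega)
  simp [ht]

theorem firstEnd_injOn_palFactors (w : List α) : Set.InjOn (firstEnd w) (palFactors w) := by
  intro u hu v hv heq
  rcases le_total u.length v.length with hlen | hlen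
  · exact eq_of_firstEnd_eq_of_length_le hu hv heq hlen
  · exact (eq_of_firstEnd_eq_of_length_le hv hu heq.symm hlen).symm

end FirstEnd

section Rich

variable {α : Type*} [DecidableEq α] {w : List α}

def palFinset (w : List α) : Finset (List α) :=
  {v ∈ w.sublists.toFinset | v <:+: w ∧ v.reverse = v}

@[simp]
theorem coe_palFinset (w : List α) : (palFinset w : Set (List α)) = palFactors w := by
  ext v
  simp only [palFinset, coe_filter, List.mem_toFinset, List.mem_sublists, Set.mem_ofPred_eq,
    palFactors]
  exact ⟨And.right, fun h => ⟨h.1.sublist, h⟩⟩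

theorem firstEnd_injOn_palFinset (w : List α) : Set.InjOn (firstEnd w) (palFinset w) := by
  simpa using firstEnd_injOn_palFactors w

theorem Rich.image_firstEnd_palFinset (hw : Rich w) :
    (palFinset w).image (firstEnd w) = range (w.length + 1) := by
  refine eq_of_subset_of_card_le (fun k hk => ?_) ?_
  · obtain ⟨v, hv, rfl⟩ := mem_image.mp hk
    rw [← mem_coe, coe_palFinset] at hv
    exact mem_range_succ_iff.mpr (firstEnd_le_length hv.1)
  · rw [card_range, card_image_of_injOn (firstEnd_injOn_palFinset w), ← Set.ncard_coe_finset, coe_palFinset, hw]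

theorem Rich.count_eq_card_palFinset_getLast? (hw : Rich w) (a : α) :
    w.count a = #{v ∈ palFinset w | v.getLast? = some a} := by
  rw [List.count_eq_card_filter_getLast?_take, ← hw.image_firstEnd_palFinset, filter_image,
    card_image_of_injOn ((firstEnd_injOn_palFinset w).mono (filter_subset _ _))]
  refine congrArg card (filter_congr fun v hv => ?_)
  rw [← mem_coe, coe_palFinset] at hv
  rw [getLast?_take_firstEnd hv.1]

end Rich

/-- Any two rich words with the same set of palindromic factors are abelian
equivalent. -/
theorem stmt18 {α : Type*} [DecidableEq α] (w w' : List α)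
    (hw : Rich w) (hw' : Rich w') (h : palFactors w = palFactors w') :
    ∀ a, w.count a = w'.count a := by
  intro a
  have hpal : palFinset w = palFinset w' := coe_injective (by simp [h])
  rw [hw.count_eq_card_palFinset_getLast?, hw'.count_eq_card_palFinset_getLast?, hpal]
end

section
/- For every k ≥ 1 and every word u, if u' is obtained from u by a k-switching, then u and u' are k-abelian equivalent, i.e., they have the same prefix of length k−1, the same suffix of length k−1, and the same number of occurrences of every factor of length k. -/
/-- `seg u p q` is the factor `u[p, q)` of `u`. -/
def seg {α : Type*} (u : List α) (p q : ℕ) : List α :=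
  (u.take q).drop p

/-- The number of occurrences of `t` as a factor of `w`. -/
def countFactor {α : Type*} [DecidableEq α] (t w : List α) : ℕ :=
  (List.range (w.length + 1)).countP (fun p => decide ((w.drop p).take t.length = t))

/-!
Write `u = A B M C D` with `B = u[i,j)`, `M = u[j,l)`, `C = u[l,m)`, so that the switched word is
`u' = A C M B D`. An occurrence of a factor of length `k` is determined by its starting block and
the `k - 1` letters that follow that block. The hypotheses `u[i,i+k-1) = u[l,l+k-1)` and
`u[j,j+k-1) = u[m,m+k-1)` say exactly that, after the switch, the `k - 1` letters following each
of `A, B, M, C` are the same as before, so every block contributes the same number of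
occurrences to `u` and to `u'`. The same agreement after `A` gives the prefix, and the suffix lies
inside `D` because `|D| ≥ k - 1`.
-/

namespace KAbelian

variable {α : Type*}

theorem take_append_congr {n K : ℕ} (x : List α) {y z : List α} (hn : n ≤ x.length + K)
    (h : y.take K = z.take K) : (x ++ y).take n = (x ++ z).take n := by
  rw [List.take_append, List.take_append]
  have := congrArg (List.take (n - x.length)) h
  rw [List.take_take, List.take_take, min_eq_left (by omega)] at this
  rw [this]

theorem drop_eq_seg_append (u : List α) {p q : ℕ} (hpq : p ≤ q) :
    u.drop p = seg u p q ++ u.drop q := by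
  conv_lhs => rw [← List.take_append_drop (q - p) (u.drop p)]
  rw [List.drop_drop, Nat.add_sub_cancel' hpq, seg, List.drop_take]

theorem drop_length_sub_append {K : ℕ} (P : List α) {D : List α} (hD : K ≤ D.length) :
    (P ++ D).drop ((P ++ D).length - K) = D.drop (D.length - K) := by
  rw [List.length_append, Nat.add_sub_assoc hD, List.drop_length_add_append]

section Counting

variable [DecidableEq α]

def countFactorStartingIn (t x y : List α) : ℕ :=
  (List.range x.length).countP (fun p => decide (((x ++ y).drop p).take t.length = t))

theorem countFactor_append (t x y : List α) :
    countFactor t (x ++ y) = countFactorStartingIn t x y + countFactor t y := by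
  rw [countFactor, countFactor, countFactorStartingIn, List.length_append, Nat.add_assoc,
    List.range_add, List.countP_append, List.countP_map]
  congr 1
  refine List.countP_congr fun p _ => ?_
  simp only [Function.comp_apply, List.drop_length_add_append]

theorem countFactorStartingIn_congr {K : ℕ} {t : List α} (ht : t.length ≤ K + 1) (x : List α)
    {y z : List α} (h : y.take K = z.take K) :
    countFactorStartingIn t x y = countFactorStartingIn t x z := by
  refine List.countP_congr fun p hp => ?_
  have hp : p < x.length := List.mem_range.mp hp
  rw [List.drop_append_of_le_length hp.le, List.drop_append_of_le_length hp.le,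
    take_append_congr (x.drop p) (by simp; omega) h]

end Counting

section Switching

variable {K : ℕ} {B M C D : List α}

theorem take_switched_tails (hB : (B ++ M ++ C ++ D).take K = (C ++ D).take K)
    (hM : (M ++ C ++ D).take K = D.take K) :
    (B ++ D).take K = (C ++ D).take K ∧ (M ++ B ++ D).take K = D.take K ∧
      (C ++ M ++ B ++ D).take K = (B ++ M ++ C ++ D).take K := by
  simp only [List.append_assoc] at *
  have hBD : (B ++ D).take K = (C ++ D).take K :=
    (take_append_congr B (by omega) hM.symm).trans hB
  have hMBD : (M ++ (B ++ D)).take K = D.take K :=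
    (take_append_congr M (by omega) hBD).trans hM
  exact ⟨hBD, hMBD, (take_append_congr C (by omega) hMBD).trans hB.symm⟩

theorem take_switch (A : List α) (hB : (B ++ M ++ C ++ D).take K = (C ++ D).take K)
    (hM : (M ++ C ++ D).take K = D.take K) :
    (A ++ C ++ M ++ B ++ D).take K = (A ++ B ++ M ++ C ++ D).take K := by
  simpa only [List.append_assoc] using
    take_append_congr A (by omega) (take_switched_tails hB hM).2.2

theorem drop_switch (A : List α) (hD : K ≤ D.length) :
    (A ++ C ++ M ++ B ++ D).drop ((A ++ C ++ M ++ B ++ D).length - K) =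
      (A ++ B ++ M ++ C ++ D).drop ((A ++ B ++ M ++ C ++ D).length - K) := by
  rw [drop_length_sub_append _ hD, drop_length_sub_append _ hD]

theorem countFactor_switch [DecidableEq α] (A : List α)
    (hB : (B ++ M ++ C ++ D).take K = (C ++ D).take K) (hM : (M ++ C ++ D).take K = D.take K)
    {t : List α} (ht : t.length ≤ K + 1) :
    countFactor t (A ++ C ++ M ++ B ++ D) = countFactor t (A ++ B ++ M ++ C ++ D) := by
  obtain ⟨hBD, hMBD, hCMBD⟩ := take_switched_tails hB hM
  simp only [List.append_assoc, countFactor_append] at *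
  rw [countFactorStartingIn_congr ht A hCMBD, countFactorStartingIn_congr ht C hMBD,
    countFactorStartingIn_congr ht M hBD, countFactorStartingIn_congr ht B hM.symm]
  omega

end Switching

end KAbelian

open KAbelian in
theorem stmt19_general {α : Type*} [DecidableEq α] (k : ℕ) (u : List α)
    (i j l m : ℕ) (hij : i < j) (hjl : j ≤ l) (hlm : l < m)
    (hm : m + (k - 1) ≤ u.length)
    (h1 : (u.drop i).take (k - 1) = (u.drop l).take (k - 1))
    (h2 : (u.drop j).take (k - 1) = (u.drop m).take (k - 1)) :
    let u' := u.take i ++ seg u l m ++ seg u j l ++ seg u i j ++ u.drop m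
    u'.take (k - 1) = u.take (k - 1) ∧
    u'.drop (u'.length - (k - 1)) = u.drop (u.length - (k - 1)) ∧
    ∀ t : List α, t.length = k → countFactor t u' = countFactor t u := by
  have hdi := drop_eq_seg_append u hij.le
  have hdj := drop_eq_seg_append u hjl
  have hdl := drop_eq_seg_append u hlm.le
  have hu : u = u.take i ++ seg u i j ++ seg u j l ++ seg u l m ++ u.drop m := by
    simp only [List.append_assoc, ← hdl, ← hdj, ← hdi, List.take_append_drop]
  rw [hdi, hdj, hdl, ← List.append_assoc, ← List.append_assoc] at h1
  rw [hdj, hdl, ← List.append_assoc] at h2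
  have hD : k - 1 ≤ (u.drop m).length := by
    rw [List.length_drop]
    omega
  refine ⟨?_, ?_, fun t ht => ?_⟩
  · have := take_switch (u.take i) h1 h2
    rwa [← hu] at this
  · have := drop_switch (u.take i) (B := seg u i j) (M := seg u j l) (C := seg u l m) hD
    rwa [← hu] at this
  · have := countFactor_switch (u.take i) h1 h2 (t := t) (by omega)
    rwa [← hu] at this

/-- A `k`-switching preserves `k`-abelian equivalence: if positions
`i < j ≤ l < m` (with `m + (k-1) ≤ |u|`) satisfy `u[i, i+k-1) = u[l, l+k-1)` and
`u[j, j+k-1) = u[m, m+k-1)`, then the word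
`u' = u[0,i) · u[l,m) · u[j,l) · u[i,j) · u[m..]` has the same prefix of length
`k-1`, the same suffix of length `k-1`, and the same number of occurrences of every
factor of length `k` as `u`. -/
theorem stmt19 {α : Type*} [DecidableEq α] (k : ℕ) (hk : 1 ≤ k) (u : List α)
    (i j l m : ℕ) (hij : i < j) (hjl : j ≤ l) (hlm : l < m)
    (hm : m + (k - 1) ≤ u.length)
    (h1 : (u.drop i).take (k - 1) = (u.drop l).take (k - 1))
    (h2 : (u.drop j).take (k - 1) = (u.drop m).take (k - 1)) :
    let u' := u.take i ++ seg u l m ++ seg u j l ++ seg u i j ++ u.drop m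
    u'.take (k - 1) = u.take (k - 1) ∧
    u'.drop (u'.length - (k - 1)) = u.drop (u.length - (k - 1)) ∧
    ∀ t : List α, t.length = k → countFactor t u' = countFactor t u :=
  stmt19_general k u i j l m hij hjl hlm hm h1 h2
end
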